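/- arXiv:2307.12281 — 5 statements merged into one kernel-verified Lean document; each statement's English description precedes it below -/
import Mathlib

section
/- For all real r > 0, we have r + √r·sin √r + 4·cos √r - 4 > 0. -/
/-!
Put `x = √r` and `g x = x ^ 2 + x * sin x + 4 * cos x - 4`. For `x > 3`, Cauchy–Schwarz gives
`|x * sin x + 4 * cos x| ≤ √(x ^ 2 + 16) < x ^ 2 - 4`. On `(0, π]` we use
`g'' x = 2 - 2 * cos x - x * sin x = 4 * sin (x / 2) * (sin (x / 2) - (x / 2) * cos (x / 2))`,
which is positive by `y < tan y` on `(0, π / 2)`; as `g 0 = g' 0 = 0`, integrating twice gives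
`g > 0` there. Since `3 < π`, the two ranges cover `(0, ∞)`.
-/

open Real Set

lemma pos_of_hasDerivAt_pos_of_eq_zero {f f' : ℝ → ℝ} {a x : ℝ}
    (hf : ∀ y, HasDerivAt f (f' y) y) (hf' : ∀ y ∈ Ioo 0 a, 0 < f' y) (h0 : f 0 = 0)
    (hx : 0 < x) (hxa : x ≤ a) : 0 < f x := by
  have hmono : StrictMonoOn f (Icc 0 a) := by
    refine strictMonoOn_of_deriv_pos (convex_Icc 0 a)
      (fun y _ => (hf y).continuousAt.continuousWithinAt) fun y hy => ?_
    rw [interior_Icc] at hy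
    rw [(hf y).deriv]
    exact hf' y hy
  simpa [h0] using hmono ⟨le_rfl, (hx.trans_le hxa).le⟩ ⟨hx.le, hxa⟩ hx

lemma mul_cos_lt_sin {y : ℝ} (hy : 0 < y) (hy' : y < π / 2) : y * cos y < sin y := by
  have hcos : 0 < cos y := cos_pos_of_mem_Ioo ⟨by linarith, hy'⟩
  have htan := lt_tan hy hy'
  rwa [tan_eq_sin_div_cos, lt_div_iff₀ hcos] at htan

lemma mul_sin_lt_two_sub_two_cos {x : ℝ} (hx : 0 < x) (hx' : x < π) :
    x * sin x < 2 - 2 * cos x := by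
  have hsin : 0 < sin (x / 2) := sin_pos_of_pos_of_lt_pi (by linarith) (by linarith)
  have hlt := mul_cos_lt_sin (y := x / 2) (by linarith) (by linarith)
  have hx2 : x = 2 * (x / 2) := by ring
  rw [hx2, sin_two_mul, cos_two_mul, ← hx2]
  nlinarith [sin_sq_add_cos_sq (x / 2)]

lemma two_mul_add_mul_cos_sub_three_mul_sin_pos {x : ℝ} (hx : 0 < x) (hx' : x ≤ π) :
    0 < 2 * x + x * cos x - 3 * sin x := by
  refine pos_of_hasDerivAt_pos_of_eq_zero (f := fun x => 2 * x + x * cos x - 3 * sin x)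
    (f' := fun x => 2 - 2 * cos x - x * sin x) (fun y => ?_) (fun y hy => ?_) (by simp) hx hx'
  · refine ((((hasDerivAt_id' y).const_mul 2).add ((hasDerivAt_id' y).mul (hasDerivAt_cos y))).sub
      ((hasDerivAt_sin y).const_mul 3)).congr_deriv ?_
    ring
  · have := mul_sin_lt_two_sub_two_cos hy.1 hy.2
    linarith

lemma sq_add_mul_sin_add_four_mul_cos_sub_four_pos_of_le_pi {x : ℝ} (hx : 0 < x) (hx' : x ≤ π) :
    0 < x ^ 2 + x * sin x + 4 * cos x - 4 := by
  refine pos_of_hasDerivAt_pos_of_eq_zero (f := fun x => x ^ 2 + x * sin x + 4 * cos x - 4)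
    (f' := fun x => 2 * x + x * cos x - 3 * sin x) (fun y => ?_) (fun y hy => ?_) (by simp) hx hx'
  · refine ((((hasDerivAt_pow 2 y).add ((hasDerivAt_id' y).mul (hasDerivAt_sin y))).add
      ((hasDerivAt_cos y).const_mul 4)).sub_const 4).congr_deriv ?_
    ring
  · have := two_mul_add_mul_cos_sub_three_mul_sin_pos hy.1 hy.2.le
    linarith

lemma sq_add_mul_sin_add_four_mul_cos_sub_four_pos_of_three_lt {x : ℝ} (hx : 3 < x) :
    0 < x ^ 2 + x * sin x + 4 * cos x - 4 := by
  have hcs : (x * sin x + 4 * cos x) ^ 2 ≤ x ^ 2 + 16 := by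
    nlinarith [sq_nonneg (x * cos x - 4 * sin x), sin_sq_add_cos_sq x]
  have hsq : (x * sin x + 4 * cos x) ^ 2 < (x ^ 2 - 4) ^ 2 := by
    nlinarith [mul_pos (pow_pos (by linarith : (0 : ℝ) < x) 2) (by nlinarith : (0 : ℝ) < x ^ 2 - 9)]
  have hlower := neg_lt_of_abs_lt (abs_lt_of_sq_lt_sq hsq (by nlinarith))
  linarith

theorem stmt_4 (r : ℝ) (hr : 0 < r) :
    r + Real.sqrt r * Real.sin (Real.sqrt r) + 4 * Real.cos (Real.sqrt r) - 4 > 0 := by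
  have hs : 0 < √r := sqrt_pos.2 hr
  have key : 0 < √r ^ 2 + √r * sin √r + 4 * cos √r - 4 := by
    rcases le_or_gt √r π with hπ | hπ
    · exact sq_add_mul_sin_add_four_mul_cos_sub_four_pos_of_le_pi hs hπ
    · exact sq_add_mul_sin_add_four_mul_cos_sub_four_pos_of_three_lt (pi_gt_three.trans hπ)
  rwa [sq_sqrt hr.le] at key
end

section
/- Let N ≥ 2 be an integer and let d₁, d₂, d₃ be real numbers. The N×N symmetric matrix Θ with Θ₁₁ = 1 + d₁ + 2d₂ + d₃, Θ₁ⱼ = Θⱼ₁ = d₁ + d₂ for j ≥ 2, Θᵢᵢ = 1 + d₁ for i ≥ 2, and Θᵢⱼ = d₁ for distinct i, j ≥ 2 is positive definite if and only if d₁ > -1/(N-1) and 1 + d₃ + (d₁ + 2d₂ - (N-1)d₂²)/(1 + (N-1)d₁) > 0. -/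
/-!
Write a vector as `(t, y)` with `y` its last `m = N - 1` coordinates, and put `s = ∑ yᵢ`,
`q = ∑ yᵢ²`. The quadratic form of `Θ` depends only on `(t, s, q)`, and with `c = 1 + m d₁`
completing the square gives
`m c xᵀΘx = (c s + m (d₁ + d₂) t)² + m c S t² + c (m q - s²)`,
where `S` is the Schur complement appearing in the second condition. By Cauchy–Schwarz
`s² ≤ m q`, so `c > 0` and `S > 0` make the form positive. Conversely the vectors `(0, 1, …, 1)`
and `(1, u, …, u)` with `u = -(d₁ + d₂) / c` evaluate the form to `m c` and `S`.
-/

open Matrix Finset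

section

variable (m d₁ d₂ d₃ : ℝ)

noncomputable def sgoiSchur : ℝ := 1 + d₃ + (d₁ + 2 * d₂ - m * d₂ ^ 2) / (1 + m * d₁)

/-- The quadratic form of the SGOI matrix at `(t, y)`, in terms of `s = ∑ yᵢ` and `q = ∑ yᵢ²`. -/
def sgoiForm (t s q : ℝ) : ℝ :=
  (1 + d₁ + 2 * d₂ + d₃) * t ^ 2 + 2 * (d₁ + d₂) * t * s + d₁ * s ^ 2 + q

variable {m d₁ d₂ d₃}

theorem mul_sgoiForm_eq (hc : 1 + m * d₁ ≠ 0) (t s q : ℝ) :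
    m * (1 + m * d₁) * sgoiForm d₁ d₂ d₃ t s q =
      ((1 + m * d₁) * s + m * (d₁ + d₂) * t) ^ 2 + m * (1 + m * d₁) * sgoiSchur m d₁ d₂ d₃ * t ^ 2
        + (1 + m * d₁) * (m * q - s ^ 2) := by
  unfold sgoiForm sgoiSchur
  field_simp
  ring

theorem sgoiForm_pos (hm : 0 < m) (hc : 0 < 1 + m * d₁) (hS : 0 < sgoiSchur m d₁ d₂ d₃)
    {t s q : ℝ} (hsq : s ^ 2 ≤ m * q) (h : t ≠ 0 ∨ 0 < q) : 0 < sgoiForm d₁ d₂ d₃ t s q := by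
  refine pos_of_mul_pos_right (a := m * (1 + m * d₁)) ?_ (by positivity)
  rw [mul_sgoiForm_eq hc.ne']
  have hrest : 0 ≤ (1 + m * d₁) * (m * q - s ^ 2) := mul_nonneg hc.le (sub_nonneg.2 hsq)
  rcases eq_or_ne t 0 with rfl | ht
  · have hq : 0 < q := h.resolve_left (not_not.2 rfl)
    rcases eq_or_ne s 0 with rfl | hs
    · have : 0 < (1 + m * d₁) * (m * q) := by positivity
      simpa using this
    · have : 0 < ((1 + m * d₁) * s) ^ 2 := by positivity
      simpa using add_pos_of_pos_of_nonneg this hrest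
  · have : 0 < m * (1 + m * d₁) * sgoiSchur m d₁ d₂ d₃ * t ^ 2 := by positivity
    nlinarith [sq_nonneg ((1 + m * d₁) * s + m * (d₁ + d₂) * t)]

theorem sgoiForm_schur (hc : 1 + m * d₁ ≠ 0) :
    sgoiForm d₁ d₂ d₃ 1 (m * (-(d₁ + d₂) / (1 + m * d₁))) (m * (-(d₁ + d₂) / (1 + m * d₁)) ^ 2) =
      sgoiSchur m d₁ d₂ d₃ := by
  have hc' : 1 + d₁ * m ≠ 0 := by rwa [mul_comm]
  unfold sgoiForm sgoiSchur
  field_simp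
  ring

end

theorem neg_one_div_lt_iff {m d : ℝ} (hm : 0 < m) : -(1 / m) < d ↔ 0 < 1 + m * d := by
  rw [neg_lt_iff_pos_add, ← mul_pos_iff_of_pos_left hm, mul_add, mul_one_div_cancel hm.ne',
    add_comm]

def sgoiMatrix (N : ℕ) (d₁ d₂ d₃ : ℝ) : Matrix (Fin N) (Fin N) ℝ :=
  Matrix.of fun i j =>
    if (i : ℕ) = 0 then
      (if (j : ℕ) = 0 then 1 + d₁ + 2 * d₂ + d₃ else d₁ + d₂)
    else if (j : ℕ) = 0 then d₁ + d₂
    else if i = j then 1 + d₁ else d₁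

namespace sgoiMatrix

variable {m : ℕ} (d₁ d₂ d₃ : ℝ)

theorem isHermitian (N : ℕ) : (sgoiMatrix N d₁ d₂ d₃).IsHermitian := by
  ext i j
  simp only [sgoiMatrix, conjTranspose_apply, of_apply, star_trivial, eq_comm (a := j)]
  split_ifs <;> rfl

@[simp] theorem zero_zero : sgoiMatrix (m + 1) d₁ d₂ d₃ 0 0 = 1 + d₁ + 2 * d₂ + d₃ := rfl

@[simp] theorem zero_succ (j : Fin m) : sgoiMatrix (m + 1) d₁ d₂ d₃ 0 j.succ = d₁ + d₂ := rfl

@[simp] theorem succ_zero (i : Fin m) : sgoiMatrix (m + 1) d₁ d₂ d₃ i.succ 0 = d₁ + d₂ := rfl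

@[simp] theorem succ_succ (i j : Fin m) :
    sgoiMatrix (m + 1) d₁ d₂ d₃ i.succ j.succ = (if i = j then 1 else 0) + d₁ := by
  simp [sgoiMatrix, Fin.succ_inj]
  split_ifs <;> ring

theorem dotProduct_mulVec_cons (t : ℝ) (y : Fin m → ℝ) :
    Fin.cons t y ⬝ᵥ sgoiMatrix (m + 1) d₁ d₂ d₃ *ᵥ Fin.cons t y =
      sgoiForm d₁ d₂ d₃ t (∑ i, y i) (∑ i, y i ^ 2) := by
  simp only [sgoiForm, dotProduct, mulVec, Fin.sum_univ_succ, Fin.cons_zero, Fin.cons_succ,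
    zero_zero, zero_succ, succ_zero, succ_succ, add_mul, ite_mul, one_mul, zero_mul,
    sum_add_distrib, sum_ite_eq, mem_univ, if_true, ← mul_sum, mul_add]
  simp only [← sum_mul, sq]
  ring

variable {d₁ d₂ d₃}

theorem posDef_iff (hm : 0 < m) :
    (sgoiMatrix (m + 1) d₁ d₂ d₃).PosDef ↔ 0 < 1 + m * d₁ ∧ 0 < sgoiSchur m d₁ d₂ d₃ := by
  rw [posDef_iff_dotProduct_mulVec, Fin.forall_fin_succ_pi]
  simp only [star_trivial, dotProduct_mulVec_cons]
  constructor
  · rintro ⟨-, hpos⟩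
    have hc : 0 < 1 + m * d₁ := by
      have := hpos 0 (fun _ => 1)
        (cons_nonzero_iff.2 (Or.inr (Function.ne_iff.2 ⟨⟨0, hm⟩, one_ne_zero⟩)))
      simp only [sgoiForm, sum_const, card_univ, Fintype.card_fin, nsmul_eq_mul] at this
      have hm' : (0 : ℝ) < m := by exact_mod_cast hm
      nlinarith
    refine ⟨hc, ?_⟩
    have := hpos 1 (fun _ => -(d₁ + d₂) / (1 + m * d₁)) (cons_nonzero_iff.2 (Or.inl one_ne_zero))
    rwa [sum_const, sum_const, card_univ, Fintype.card_fin, nsmul_eq_mul, nsmul_eq_mul,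
      sgoiForm_schur hc.ne'] at this
  · rintro ⟨hc, hS⟩
    refine ⟨isHermitian _ _ _ _, fun t y hne => sgoiForm_pos (by exact_mod_cast hm) hc hS ?_ ?_⟩
    · simpa using sq_sum_le_card_mul_sum_sq (s := univ) (f := y)
    · refine (cons_nonzero_iff.1 hne).imp_right fun hy => ?_
      simpa [dotProduct, sq] using dotProduct_star_self_pos_iff.2 hy

end sgoiMatrix

theorem stmt_6 (N : ℕ) (hN : 2 ≤ N) (d₁ d₂ d₃ : ℝ)
    (Θ : Matrix (Fin N) (Fin N) ℝ)
    (hΘ : Θ = Matrix.of fun (i j : Fin N) =>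
      if (i : ℕ) = 0 then
        (if (j : ℕ) = 0 then 1 + d₁ + 2 * d₂ + d₃ else d₁ + d₂)
      else if (j : ℕ) = 0 then d₁ + d₂
      else if i = j then 1 + d₁ else d₁) :
    Θ.PosDef ↔ (d₁ > -(1 / (N - 1 : ℝ)) ∧
      1 + d₃ + (d₁ + 2 * d₂ - (N - 1 : ℝ) * d₂ ^ 2) / (1 + (N - 1 : ℝ) * d₁) > 0) := by
  obtain ⟨m, rfl⟩ : ∃ m, N = m + 1 := ⟨N - 1, by omega⟩
  have hm : 0 < m := by omega
  have hcast : ((m + 1 : ℕ) : ℝ) - 1 = m := by push_cast; ring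
  subst hΘ
  rw [hcast, gt_iff_lt, gt_iff_lt, neg_one_div_lt_iff (by exact_mod_cast hm)]
  exact sgoiMatrix.posDef_iff hm
end

section
/- Let ν be a measure on (0,∞) with ∫ t² ν(dt) < ∞, and A ≥ 0, and let D(r) = ∫_{(0,∞)} (1 - e^{-rt}) ν(dt) + A·r. Then for all r > 0: D''(0)·(D'(r) - D'(0)) ≤ D'(0)·(D''(r) - D''(0)). -/
/-!
Since `D''(0) (D'(r) - D'(0)) - D'(0) (D''(r) - D''(0))` equals
`(∫ t)(∫ t² e^{-rt}) - (∫ t²)(∫ t e^{-rt}) - A (∫ t² - ∫ t² e^{-rt})` and the last term is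
nonnegative, it suffices to show `(∫ t)(∫ t² e^{-rt}) ≤ (∫ t²)(∫ t e^{-rt})`. This is
Chebyshev's integral inequality for the oppositely ordered functions `t` and `e^{-rt}` with
weight `t`: integrating `s t (s - t)(e^{-rs} - e^{-rt}) ≤ 0` over both variables and expanding
gives twice the difference. If `t` is not integrable, neither is `t e^{-rt}`, and both sides
are `0`.
-/

open MeasureTheory Real

theorem Antivary.integral_mul_integral_le_integral_mul_integral {α : Type*} [MeasurableSpace α]
    {μ : Measure α} {w f g : α → ℝ} (hfg : Antivary f g) (hw : ∀ᵐ x ∂μ, 0 ≤ w x)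
    (hw_int : Integrable w μ) (hwf : Integrable (fun x => w x * f x) μ)
    (hwg : Integrable (fun x => w x * g x) μ) (hwfg : Integrable (fun x => w x * f x * g x) μ) :
    (∫ x, w x ∂μ) * ∫ x, w x * f x * g x ∂μ ≤ (∫ x, w x * f x ∂μ) * ∫ x, w x * g x ∂μ := by
  set W := ∫ x, w x ∂μ
  set F := ∫ x, w x * f x ∂μ
  set G := ∫ x, w x * g x ∂μ
  set H := ∫ x, w x * f x * g x ∂μ
  have integral_lincomb (a b c d : ℝ) :
      ∫ x, (a * w x + b * (w x * f x) + c * (w x * g x) + d * (w x * f x * g x)) ∂μ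
        = a * W + b * F + c * G + d * H := by
    rw [integral_add (by fun_prop) (hwfg.const_mul d), integral_add (by fun_prop) (hwg.const_mul c),
      integral_add (hw_int.const_mul a) (hwf.const_mul b), integral_const_mul, integral_const_mul,
      integral_const_mul, integral_const_mul]
  have inner (x : α) : ∫ y, w y * ((f x - f y) * (g x - g y)) ∂μ
      = f x * g x * W - g x * F - f x * G + H := calc
    _ = ∫ y, (f x * g x * w y + -g x * (w y * f y) + -f x * (w y * g y)
          + 1 * (w y * f y * g y)) ∂μ := by
      congr 1; ext y; ring
    _ = _ := by rw [integral_lincomb]; ring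
  have double_integral_nonpos : 2 * (W * H - F * G) ≤ 0 := calc
    _ = ∫ x, (H * w x + -G * (w x * f x) + -F * (w x * g x) + W * (w x * f x * g x)) ∂μ := by
      rw [integral_lincomb]; ring
    _ = ∫ x, w x * ∫ y, w y * ((f x - f y) * (g x - g y)) ∂μ ∂μ := by
      congr 1; ext x; rw [inner]; ring
    _ ≤ 0 := by
      refine integral_nonpos_of_ae ?_
      filter_upwards [hw] with x hx
      refine mul_nonpos_of_nonneg_of_nonpos hx (integral_nonpos_of_ae ?_)
      filter_upwards [hw] with y hy
      exact mul_nonpos_of_nonneg_of_nonpos hy (hfg.sub_mul_sub_nonpos y x)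
  linarith

section ExpNegMul

variable {μ : Measure ℝ} {r : ℝ}

theorem norm_exp_neg_mul_le_one (hr : 0 ≤ r) {t : ℝ} (ht : 0 ≤ t) : ‖exp (-r * t)‖ ≤ 1 := by
  rw [norm_of_nonneg (exp_pos _).le, exp_le_one_iff]
  nlinarith

theorem MeasureTheory.Integrable.mul_exp_neg_mul {f : ℝ → ℝ} (hμ : ∀ᵐ t ∂μ, 0 ≤ t) (hr : 0 ≤ r)
    (hf : Integrable f μ) : Integrable (fun t => f t * exp (-r * t)) μ :=
  hf.mul_bdd (by fun_prop) (hμ.mono fun _ ht => norm_exp_neg_mul_le_one hr ht)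

theorem le_exp_mul_mul_exp_neg_mul_add_sq (hr : 0 ≤ r) {t : ℝ} (ht : 0 ≤ t) :
    t ≤ exp r * (t * exp (-r * t)) + t ^ 2 := by
  rcases le_total t 1 with ht1 | ht1
  · have : 1 ≤ exp r * exp (-r * t) := by
      rw [← exp_add, one_le_exp_iff]
      nlinarith
    nlinarith [sq_nonneg t]
  · nlinarith [mul_nonneg (exp_pos r).le (mul_nonneg ht (exp_pos (-r * t)).le)]

theorem integrable_id_of_integrable_mul_exp_neg_mul (hμ : ∀ᵐ t ∂μ, 0 ≤ t) (hr : 0 ≤ r)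
    (h_exp : Integrable (fun t => t * exp (-r * t)) μ) (h_sq : Integrable (fun t => t ^ 2) μ) :
    Integrable (fun t => t) μ := by
  refine ((h_exp.const_mul (exp r)).add h_sq).mono' (by fun_prop) ?_
  filter_upwards [hμ] with t ht
  rw [norm_of_nonneg ht]
  exact le_exp_mul_mul_exp_neg_mul_add_sq hr ht

theorem integral_mul_integral_sq_mul_exp_le (hμ : ∀ᵐ t ∂μ, 0 ≤ t) (hr : 0 ≤ r)
    (h_sq : Integrable (fun t => t ^ 2) μ) :
    (∫ t, t ∂μ) * ∫ t, t ^ 2 * exp (-r * t) ∂μ ≤ (∫ t, t ^ 2 ∂μ) * ∫ t, t * exp (-r * t) ∂μ := by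
  by_cases h_id : Integrable (fun t => t) μ
  · have hfg : Antivary (fun t : ℝ => t) (fun t => exp (-r * t)) :=
      monotone_id.antivary fun s t hst => exp_le_exp.2 (by nlinarith)
    have h := hfg.integral_mul_integral_le_integral_mul_integral hμ h_id
      (by simpa only [← sq] using h_sq) (h_id.mul_exp_neg_mul hμ hr)
      (by simpa only [← sq] using h_sq.mul_exp_neg_mul hμ hr)
    simpa only [← sq] using h
  · have h_exp : ¬Integrable (fun t => t * exp (-r * t)) μ := fun h_exp =>
      h_id (integrable_id_of_integrable_mul_exp_neg_mul hμ hr h_exp h_sq)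
    simp only [integral_undef h_id, integral_undef h_exp, zero_mul, mul_zero, le_refl]

end ExpNegMul

theorem stmt_9_general (ν : Measure ℝ) (A : ℝ) (hA : 0 ≤ A)
    (hν2 : Integrable (fun t => t ^ 2) (ν.restrict (Set.Ioi 0)))
    (D' D'' : ℝ → ℝ)
    (hD' : ∀ r : ℝ, D' r = A + ∫ t in Set.Ioi (0 : ℝ), t * exp (-r * t) ∂ν)
    (hD'' : ∀ r : ℝ, D'' r = -∫ t in Set.Ioi (0 : ℝ), t ^ 2 * exp (-r * t) ∂ν)
    (r : ℝ) (hr : 0 < r) :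
    D'' 0 * (D' r - D' 0) ≤ D' 0 * (D'' r - D'' 0) := by
  have hμ : ∀ᵐ t ∂ν.restrict (Set.Ioi 0), 0 ≤ t :=
    ae_restrict_of_forall_mem measurableSet_Ioi fun _ ht => le_of_lt ht
  have h_cheb := integral_mul_integral_sq_mul_exp_le hμ hr.le hν2
  have h_sq_exp_le : ∫ t in Set.Ioi 0, t ^ 2 * exp (-r * t) ∂ν ≤ ∫ t in Set.Ioi 0, t ^ 2 ∂ν :=
    integral_mono_ae (hν2.mul_exp_neg_mul hμ hr.le) hν2 <| hμ.mono fun t ht =>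
      mul_le_of_le_one_right (sq_nonneg t) ((le_abs_self _).trans (norm_exp_neg_mul_le_one hr.le ht))
  rw [hD', hD', hD'', hD'']
  simp only [neg_zero, zero_mul, exp_zero, mul_one]
  nlinarith [mul_nonneg hA (sub_nonneg.2 h_sq_exp_le)]

theorem stmt_9 (ν : Measure ℝ) (A : ℝ) (hA : 0 ≤ A)
    (hν2 : Integrable (fun t => t ^ 2) (ν.restrict (Set.Ioi 0)))
    (D D' D'' : ℝ → ℝ)
    (hD : ∀ r : ℝ, D r = (∫ t in Set.Ioi (0 : ℝ), (1 - exp (-r * t)) ∂ν) + A * r)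
    (hD' : ∀ r : ℝ, D' r = A + ∫ t in Set.Ioi (0 : ℝ), t * exp (-r * t) ∂ν)
    (hD'' : ∀ r : ℝ, D'' r = -∫ t in Set.Ioi (0 : ℝ), t ^ 2 * exp (-r * t) ∂ν)
    (r : ℝ) (hr : 0 < r) :
    D'' 0 * (D' r - D' 0) ≤ D' 0 * (D'' r - D'' 0) :=
  stmt_9_general ν A hA hν2 D' D'' hD' hD'' r hr
end

section
/- Let N ≥ 1. Let G be the real symmetric (N+1)×(N+1) block matrix G = [[A, B],[Bᵀ, C]] with A an m×m block, and suppose C is invertible. Write G⁻¹ (when G is invertible) in the same block form [[A', B'],[B'ᵀ, C']]. Then the signature of G equals the signature of A plus the signature of C'. -/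
/-!
By the spectral theorem and Sylvester's law of inertia, the eigenvalue signature is the signature
of the quadratic form `x ↦ xᵀ M x`; it is therefore invariant under congruence `M ↦ Pᵀ M P` and
additive on block-diagonal matrices. Block elimination gives, for symmetric invertible `C`,
`sgn [[X, Y], [Yᵀ, C]] = sgn (X - Y C⁻¹ Yᵀ) + sgn C`; with `S = A - B C⁻¹ Bᵀ` this is
`sgn G = sgn S + sgn C`. The auxiliary matrix `T = [[S, E], [Eᵀ, -C⁻¹]]`, `E = B C⁻¹`, has Schur
complements `A` (eliminating `-C⁻¹`) and `-C'` (eliminating `S`), so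
`sgn A - sgn C = sgn T = sgn S - sgn C'`.
-/

open Matrix

/-- The signature of a real symmetric matrix: number of positive eigenvalues
minus number of negative eigenvalues. -/
noncomputable def matrixSignature {n : Type*} [Fintype n] [DecidableEq n]
    (M : Matrix n n ℝ) (hM : M.IsHermitian) : ℤ :=
  ((Finset.univ.filter fun i => 0 < hM.eigenvalues i).card : ℤ) -
    ((Finset.univ.filter fun i => hM.eigenvalues i < 0).card : ℤ)

open QuadraticMap Finset

lemma Finset.card_filter_sumElim {ι κ α : Type*} [Fintype ι] [Fintype κ] (p : α → Prop)
    [DecidablePred p] (w : ι → α) (w' : κ → α) :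
    #{i | p (Sum.elim w w' i)} = #{i | p (w i)} + #{i | p (w' i)} := by
  rw [card_filter, card_filter, card_filter, Fintype.sum_sum_type]
  rfl

namespace QuadraticMap

lemma weightedSumSquares_sumElim_equivalent_prod {R ι κ : Type*} [CommSemiring R]
    [Fintype ι] [Fintype κ] (w : ι → R) (w' : κ → R) :
    (weightedSumSquares R (Sum.elim w w')).Equivalent
      ((weightedSumSquares R w).prod (weightedSumSquares R w')) :=
  ⟨⟨LinearEquiv.sumArrowLequivProdArrow ι κ R R, fun x => by simp [Fintype.sum_sum_type]⟩⟩

section LinearOrder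

variable {R M M' : Type*} [CommRing R] [LinearOrder R] [AddCommGroup M] [Module R M]
  [AddCommGroup M'] [Module R M']

noncomputable def signature (Q : QuadraticForm R M) : ℤ := sigPos Q - sigNeg Q

@[simp]
lemma signature_neg (Q : QuadraticForm R M) : (-Q).signature = -Q.signature := by
  simp [signature]

lemma Equivalent.signature_eq {Q : QuadraticForm R M} {Q' : QuadraticForm R M'}
    (h : Q.Equivalent Q') : Q.signature = Q'.signature := by
  rw [signature, signature, h.sigPos_eq, h.sigNeg_eq]

end LinearOrder

variable {𝕜 M M' : Type*} [Field 𝕜] [LinearOrder 𝕜] [IsStrictOrderedRing 𝕜]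
  [AddCommGroup M] [Module 𝕜 M] [AddCommGroup M'] [Module 𝕜 M']

lemma signature_weightedSumSquares {ι : Type*} [Fintype ι] (w : ι → 𝕜) :
    (weightedSumSquares 𝕜 w).signature = #{i | 0 < w i} - #{i | w i < 0} := by
  rw [signature, QuadraticForm.sigPos_weightedSumSquares, QuadraticForm.sigNeg_weightedSumSquares,
    ← Set.ncard_coe_finset, ← Set.ncard_coe_finset]
  simp

lemma signature_prod [FiniteDimensional 𝕜 M] [FiniteDimensional 𝕜 M']
    (Q : QuadraticForm 𝕜 M) (Q' : QuadraticForm 𝕜 M') :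
    (Q.prod Q').signature = Q.signature + Q'.signature := by
  have : Invertible (2 : 𝕜) := invertibleOfNonzero two_ne_zero
  obtain ⟨w, hw⟩ := Q.equivalent_weightedSumSquares
  obtain ⟨w', hw'⟩ := Q'.equivalent_weightedSumSquares
  rw [(hw.prod hw').signature_eq, hw.signature_eq, hw'.signature_eq,
    ← (weightedSumSquares_sumElim_equivalent_prod w w').signature_eq,
    signature_weightedSumSquares, signature_weightedSumSquares, signature_weightedSumSquares,
    card_filter_sumElim ((0 : 𝕜) < ·), card_filter_sumElim (· < (0 : 𝕜))]
  push_cast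
  ring

end QuadraticMap

namespace Matrix

section CommRing

variable {R ι κ : Type*} [CommRing R] [Fintype ι] [DecidableEq ι] [Fintype κ] [DecidableEq κ]

lemma toQuadraticForm'_apply (M : Matrix ι ι R) (x : ι → R) :
    M.toQuadraticForm' x = x ⬝ᵥ M *ᵥ x := by
  simp [toQuadraticForm', toLinearMap₂'_apply']

@[simp]
lemma toQuadraticForm'_neg (M : Matrix ι ι R) :
    (-M).toQuadraticForm' = -M.toQuadraticForm' := by
  ext x
  simp [toQuadraticForm'_apply, neg_mulVec]

lemma toQuadraticForm'_diagonal (d : ι → R) :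
    (diagonal d).toQuadraticForm' = weightedSumSquares R d := by
  ext x
  simp [toQuadraticForm'_apply, dotProduct, mulVec_diagonal, mul_left_comm]

lemma toQuadraticForm'_transpose_mul_mul (M P : Matrix ι ι R) :
    (Pᵀ * M * P).toQuadraticForm' = M.toQuadraticForm'.comp (toLin' P) := by
  ext x
  simp [toQuadraticForm'_apply, ← mulVec_mulVec, dotProduct_mulVec, vecMul_transpose]

lemma equivalent_toQuadraticForm'_transpose_mul_mul (M : Matrix ι ι R) {P : Matrix ι ι R}
    (hP : IsUnit P) : (Pᵀ * M * P).toQuadraticForm'.Equivalent M.toQuadraticForm' := by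
  have := hP.invertible
  rw [toQuadraticForm'_transpose_mul_mul]
  exact ⟨(M.toQuadraticForm'.isometryEquivOfCompLinearEquiv (P.toLinearEquiv' this)).symm⟩

lemma equivalent_toQuadraticForm'_submatrix (M : Matrix ι ι R) (e : κ ≃ ι) :
    (M.submatrix e e).toQuadraticForm'.Equivalent M.toQuadraticForm' :=
  ⟨⟨LinearEquiv.funCongrLeft R R e.symm, fun x => by
    simp only [toQuadraticForm'_apply, submatrix_mulVec_equiv]
    exact comp_equiv_symm_dotProduct x (M *ᵥ (x ∘ e.symm)) e⟩⟩

lemma equivalent_toQuadraticForm'_fromBlocks_zero (X : Matrix ι ι R) (Z : Matrix κ κ R) :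
    (fromBlocks X 0 0 Z).toQuadraticForm'.Equivalent
      (X.toQuadraticForm'.prod Z.toQuadraticForm') :=
  ⟨⟨LinearEquiv.sumArrowLequivProdArrow ι κ R R, fun x => by
    simp only [QuadraticMap.prod_apply, toQuadraticForm'_apply, fromBlocks_mulVec, zero_mulVec, add_zero,
      zero_add, dotProduct, Fintype.sum_sum_type, Sum.elim_inl, Sum.elim_inr]
    rfl⟩⟩

lemma isUnit_sub_of_isUnit_fromBlocks {A : Matrix ι ι R} {B : Matrix ι κ R} {C : Matrix κ ι R}
    {D : Matrix κ κ R} (hD : IsUnit D) (h : IsUnit (fromBlocks A B C D)) :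
    IsUnit (A - B * D⁻¹ * C) := by
  have := hD.invertible
  have := h.invertible
  have := invertibleOfFromBlocks₂₂Invertible A B C D
  simpa [invOf_eq_nonsing_inv] using isUnit_of_invertible (A - B * ⅟D * C)

lemma toBlocks₂₂_inv_fromBlocks {A : Matrix ι ι R} {B : Matrix ι κ R} {C : Matrix κ ι R}
    {D : Matrix κ κ R} (hD : IsUnit D) (h : IsUnit (fromBlocks A B C D)) :
    (fromBlocks A B C D)⁻¹.toBlocks₂₂ = D⁻¹ + D⁻¹ * C * (A - B * D⁻¹ * C)⁻¹ * B * D⁻¹ := by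
  have := hD.invertible
  have := h.invertible
  have := invertibleOfFromBlocks₂₂Invertible A B C D
  rw [← invOf_eq_nonsing_inv (fromBlocks A B C D), invOf_fromBlocks₂₂_eq, toBlocks_fromBlocks₂₂]
  simp [invOf_eq_nonsing_inv]

variable [LinearOrder R]

noncomputable def signature (M : Matrix ι ι R) : ℤ := M.toQuadraticForm'.signature

@[simp]
lemma signature_neg (M : Matrix ι ι R) : (-M).signature = -M.signature := by
  simp [signature]

lemma signature_transpose_mul_mul (M : Matrix ι ι R) {P : Matrix ι ι R} (hP : IsUnit P) :
    (Pᵀ * M * P).signature = M.signature :=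
  (equivalent_toQuadraticForm'_transpose_mul_mul M hP).signature_eq

lemma signature_submatrix_equiv (M : Matrix ι ι R) (e : κ ≃ ι) :
    (M.submatrix e e).signature = M.signature :=
  (equivalent_toQuadraticForm'_submatrix M e).signature_eq

lemma signature_inv {M : Matrix ι ι R} (hM : M.IsSymm) (hMu : IsUnit M) :
    M⁻¹.signature = M.signature := by
  have hM' : M⁻¹ = (M⁻¹)ᵀ * M * M⁻¹ := by
    rw [hM.inv.eq, Matrix.mul_assoc, mul_nonsing_inv _ ((isUnit_iff_isUnit_det M).1 hMu),
      Matrix.mul_one]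
  rw [hM', signature_transpose_mul_mul _ (isUnit_nonsing_inv_iff.2 hMu)]

end CommRing

section OrderedField

variable {𝕜 ι κ : Type*} [Field 𝕜] [LinearOrder 𝕜] [IsStrictOrderedRing 𝕜]
  [Fintype ι] [DecidableEq ι] [Fintype κ] [DecidableEq κ]

lemma signature_fromBlocks_zero (X : Matrix ι ι 𝕜) (Z : Matrix κ κ 𝕜) :
    (fromBlocks X 0 0 Z).signature = X.signature + Z.signature := by
  rw [signature, (equivalent_toQuadraticForm'_fromBlocks_zero X Z).signature_eq,
    QuadraticMap.signature_prod, signature, signature]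

lemma signature_fromBlocks₂₂ (X : Matrix ι ι 𝕜) (Y : Matrix ι κ 𝕜) {Z : Matrix κ κ 𝕜}
    (hZ : Z.IsSymm) (hZu : IsUnit Z) :
    (fromBlocks X Y Yᵀ Z).signature = (X - Y * Z⁻¹ * Yᵀ).signature + Z.signature := by
  have := hZu.invertible
  have hP : IsUnit (fromBlocks 1 0 (Z⁻¹ * Yᵀ) 1 : Matrix (ι ⊕ κ) (ι ⊕ κ) 𝕜) :=
    isUnit_fromBlocks_zero₁₂.2 ⟨isUnit_one, isUnit_one⟩
  have hcongr : fromBlocks X Y Yᵀ Z = (fromBlocks 1 0 (Z⁻¹ * Yᵀ) 1)ᵀ *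
      fromBlocks (X - Y * Z⁻¹ * Yᵀ) 0 0 Z * fromBlocks 1 0 (Z⁻¹ * Yᵀ) 1 := by
    rw [fromBlocks_eq_of_invertible₂₂ X Y Yᵀ Z, fromBlocks_transpose, transpose_mul,
      hZ.inv.eq, transpose_transpose, invOf_eq_nonsing_inv]
    simp
  rw [hcongr, signature_transpose_mul_mul _ hP, signature_fromBlocks_zero]

lemma signature_fromBlocks₁₁ {X : Matrix ι ι 𝕜} (Y : Matrix ι κ 𝕜) (Z : Matrix κ κ 𝕜)
    (hX : X.IsSymm) (hXu : IsUnit X) :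
    (fromBlocks X Y Yᵀ Z).signature = X.signature + (Z - Yᵀ * X⁻¹ * Y).signature := by
  have hswap : (fromBlocks X Y Yᵀ Z).submatrix (Equiv.sumComm κ ι) (Equiv.sumComm κ ι) =
      fromBlocks Z Yᵀ Yᵀᵀ X :=
    fromBlocks_submatrix_sum_swap_sum_swap X Y Yᵀ Z
  rw [← signature_submatrix_equiv _ (Equiv.sumComm κ ι), hswap,
    signature_fromBlocks₂₂ _ _ hX hXu, transpose_transpose, add_comm]

theorem signature_fromBlocks_eq_add_signature_toBlocks₂₂_inv {A : Matrix ι ι 𝕜}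
    (B : Matrix ι κ 𝕜) {C : Matrix κ κ 𝕜} (hA : A.IsSymm) (hC : C.IsSymm) (hCu : IsUnit C)
    (hGu : IsUnit (fromBlocks A B Bᵀ C)) :
    (fromBlocks A B Bᵀ C).signature =
      A.signature + (fromBlocks A B Bᵀ C)⁻¹.toBlocks₂₂.signature := by
  set S := A - B * C⁻¹ * Bᵀ
  have hSu : IsUnit S := isUnit_sub_of_isUnit_fromBlocks hCu hGu
  have hS : S.IsSymm := hA.sub (by simp [IsSymm, transpose_mul, hC.inv.eq, Matrix.mul_assoc])
  have hCC : C⁻¹ * C = 1 := nonsing_inv_mul C ((isUnit_iff_isUnit_det C).1 hCu)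
  have hneg : (-C⁻¹)⁻¹ = -C :=
    inv_eq_left_inv (by rw [neg_mul_neg, mul_nonsing_inv C ((isUnit_iff_isUnit_det C).1 hCu)])
  set E := B * C⁻¹
  have hA_schur : S - E * (-C⁻¹)⁻¹ * Eᵀ = A := by
    simp [S, E, hneg, transpose_mul, hC.inv.eq, Matrix.mul_assoc, hCC]
  have hC'_schur : -C⁻¹ - Eᵀ * S⁻¹ * E = -(fromBlocks A B Bᵀ C)⁻¹.toBlocks₂₂ := by
    rw [toBlocks₂₂_inv_fromBlocks hCu hGu]
    simp only [E, S, transpose_mul, hC.inv.eq, Matrix.mul_assoc, neg_add_rev]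
    abel
  have h₁ := signature_fromBlocks₂₂ A B hC hCu
  have h₂ := signature_fromBlocks₂₂ S E hC.inv.neg (isUnit_nonsing_inv_iff.2 hCu).neg
  have h₃ := signature_fromBlocks₁₁ E (-C⁻¹) hS hSu
  rw [hA_schur] at h₂
  rw [hC'_schur] at h₃
  simp only [signature_neg, signature_inv hC hCu] at h₂ h₃
  linarith

end OrderedField

end Matrix

lemma matrixSignature_eq_signature {ι : Type*} [Fintype ι] [DecidableEq ι] {M : Matrix ι ι ℝ}
    (hM : M.IsHermitian) : matrixSignature M hM = M.signature := by
  have hdiag : (hM.eigenvectorUnitary : Matrix ι ι ℝ)ᵀ * M * hM.eigenvectorUnitary =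
      diagonal hM.eigenvalues := by
    simpa [Unitary.conjStarAlgAut_star_apply, star_eq_conjTranspose] using
      hM.conjStarAlgAut_star_eigenvectorUnitary
  rw [← signature_transpose_mul_mul M Unitary.isUnit_coe, hdiag, Matrix.signature,
    toQuadraticForm'_diagonal, signature_weightedSumSquares, matrixSignature]

theorem stmt_14_general (m n : ℕ)
    (A : Matrix (Fin m) (Fin m) ℝ) (B : Matrix (Fin m) (Fin n) ℝ)
    (C : Matrix (Fin n) (Fin n) ℝ)
    (G : Matrix (Fin m ⊕ Fin n) (Fin m ⊕ Fin n) ℝ)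
    (hG : G = Matrix.fromBlocks A B Bᵀ C)
    (hGsym : G.IsHermitian) (hA : A.IsHermitian)
    (hCinv : IsUnit C) (hGinv : IsUnit G)
    (C' : Matrix (Fin n) (Fin n) ℝ) (hC' : C' = (G⁻¹).toBlocks₂₂)
    (hC'sym : C'.IsHermitian) :
    matrixSignature G hGsym = matrixSignature A hA + matrixSignature C' hC'sym := by
  obtain ⟨-, -, -, hC⟩ := isSymm_fromBlocks_iff.1 (hG ▸ isHermitian_iff_isSymm.1 hGsym)
  rw [matrixSignature_eq_signature, matrixSignature_eq_signature, matrixSignature_eq_signature,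
    hC']
  subst hG
  exact signature_fromBlocks_eq_add_signature_toBlocks₂₂_inv B (isHermitian_iff_isSymm.1 hA) hC
    hCinv hGinv

theorem stmt_14 (N m n : ℕ) (hN : 1 ≤ N) (hmn : m + n = N + 1)
    (A : Matrix (Fin m) (Fin m) ℝ) (B : Matrix (Fin m) (Fin n) ℝ)
    (C : Matrix (Fin n) (Fin n) ℝ)
    (G : Matrix (Fin m ⊕ Fin n) (Fin m ⊕ Fin n) ℝ)
    (hG : G = Matrix.fromBlocks A B Bᵀ C)
    (hGsym : G.IsHermitian) (hA : A.IsHermitian)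
    (hCinv : IsUnit C) (hGinv : IsUnit G)
    (C' : Matrix (Fin n) (Fin n) ℝ) (hC' : C' = (G⁻¹).toBlocks₂₂)
    (hC'sym : C'.IsHermitian) :
    matrixSignature G hGsym = matrixSignature A hA + matrixSignature C' hC'sym :=
  stmt_14_general m n A B C G hG hGsym hA hCinv hGinv C' hC' hC'sym
end

section
/- Let N ≥ 2 and let α, β, K be real numbers with K < 0 and r > 0. Suppose 1 + N/2 + (N+1)α²r²/(8K) + αβr/(2K) + Nβ²/(4K) > 0. Then 1/(N-1) + 1/2 + β²/(4K) > 0. -/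
/-!
Completing the square in `α` turns the hypothesis into
`(n + 2) / 2 + (n + 2)(n - 1) β² / (4 (n + 1) K) + ((n + 1) α r + 2 β)² / (8 (n + 1) K) > 0`.
Since `K < 0` the last term is nonpositive and may be dropped; what remains is a positive multiple
of `1 / (n - 1) + 1 / 2 + β² / (4 K)`.
-/

namespace Nondegeneracy

variable {n α β r K : ℝ}

theorem eq_complete_square (hn : n + 1 ≠ 0) (hK : K ≠ 0) :
    1 + n / 2 + (n + 1) * α ^ 2 * r ^ 2 / (8 * K) + α * β * r / (2 * K) + n * β ^ 2 / (4 * K)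
      = (n + 2) / 2 + (n + 2) * (n - 1) * β ^ 2 / (4 * (n + 1) * K)
        + ((n + 1) * α * r + 2 * β) ^ 2 / (8 * (n + 1) * K) := by
  field_simp
  ring

theorem eq_mul_reduced (hn : 1 < n) (hK : K ≠ 0) :
    1 / (n - 1) + 1 / 2 + β ^ 2 / (4 * K)
      = (n + 1) / ((n - 1) * (n + 2))
        * ((n + 2) / 2 + (n + 2) * (n - 1) * β ^ 2 / (4 * (n + 1) * K)) := by
  have : n - 1 ≠ 0 := by linarith
  have : n + 1 ≠ 0 := by linarith
  have : n + 2 ≠ 0 := by linarith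
  field_simp
  ring

theorem reduced_pos (hn : 1 < n) (hK : K < 0)
    (h : 1 + n / 2 + (n + 1) * α ^ 2 * r ^ 2 / (8 * K) + α * β * r / (2 * K)
      + n * β ^ 2 / (4 * K) > 0) :
    0 < (n + 2) / 2 + (n + 2) * (n - 1) * β ^ 2 / (4 * (n + 1) * K) := by
  rw [eq_complete_square (by linarith) hK.ne] at h
  have hsq : ((n + 1) * α * r + 2 * β) ^ 2 / (8 * (n + 1) * K) ≤ 0 :=
    div_nonpos_of_nonneg_of_nonpos (sq_nonneg _) (by nlinarith)
  linarith

end Nondegeneracy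

theorem stmt_19_general (N : ℕ) (hN : 2 ≤ N) (α β r K : ℝ) (hK : K < 0)
    (h : 1 + (N : ℝ) / 2 + (N + 1 : ℝ) * α ^ 2 * r ^ 2 / (8 * K)
      + α * β * r / (2 * K) + (N : ℝ) * β ^ 2 / (4 * K) > 0) :
    1 / (N - 1 : ℝ) + 1 / 2 + β ^ 2 / (4 * K) > 0 := by
  have hN : (1 : ℝ) < N := by exact_mod_cast hN
  rw [gt_iff_lt, Nondegeneracy.eq_mul_reduced hN hK.ne]
  exact mul_pos (by apply div_pos <;> nlinarith) (Nondegeneracy.reduced_pos hN hK h)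

theorem stmt_19 (N : ℕ) (hN : 2 ≤ N) (α β r K : ℝ) (hK : K < 0) (hr : 0 < r)
    (h : 1 + (N : ℝ) / 2 + (N + 1 : ℝ) * α ^ 2 * r ^ 2 / (8 * K)
      + α * β * r / (2 * K) + (N : ℝ) * β ^ 2 / (4 * K) > 0) :
    1 / (N - 1 : ℝ) + 1 / 2 + β ^ 2 / (4 * K) > 0 :=
  stmt_19_general N hN α β r K hK h
end
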